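/- arXiv:2509.11460 — 7 statements merged into one kernel-verified Lean document; each statement's English description precedes it below -/
import Mathlib

section
/- Let M be a matroid on a finite ground set E and let A_1, …, A_k be subsets of E such that for every nonempty σ ⊆ {1,…,k} the unique union A_σ is a dependent set of M. Then k ≤ |E| − rank(M). -/
open Set Matroid

/-- The unique union of the subfamily of `A` indexed by `σ`: the set of elements that lie in
`A i` for exactly one index `i ∈ σ`. -/
def uniqueUnion {α ι : Type*} (A : ι → Set α) (σ : Finset ι) : Set α :=
  {e | ∃! i, i ∈ σ ∧ e ∈ A i}

namespace Matroid

variable {α : Type*}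

/-- A circuit of a matroid: a minimal dependent set. -/
def Circuit (M : Matroid α) (C : Set α) : Prop := Minimal M.Dep C

/-- A cycle of a matroid: a union of circuits. -/
def IsCycle (M : Matroid α) (K : Set α) : Prop :=
  ∃ S : Set (Set α), (∀ C ∈ S, M.Circuit C) ∧ K = ⋃₀ S

/-- The rank of a matroid: the cardinality of a base. -/
noncomputable def rkNat (M : Matroid α) : ℕ := M.exists_isBase.choose.ncard

/-- A cycle system for `M`: a family of cycles, indexed by a finite type whose cardinality is
the corank `|E| - rank` of `M`, such that the unique union of every nonempty subfamily is
dependent. -/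
def IsCycleSystem (M : Matroid α) {ι : Type*} [Fintype ι] (C : ι → Set α) : Prop :=
  Fintype.card ι = M.E.ncard - M.rkNat ∧ (∀ i, M.IsCycle (C i)) ∧
    ∀ σ : Finset ι, σ.Nonempty → M.Dep (uniqueUnion C σ)

/-- Deletion of a set of elements from a matroid. -/
def delete' (M : Matroid α) (D : Set α) : Matroid α := M ↾ (M.E \ D)

/-- Contraction of a set of elements in a matroid, defined via duality. -/
def contract' (M : Matroid α) (X : Set α) : Matroid α := (M✶.delete' X)✶

end Matroid

/-- A coparking function with respect to a family `C` of sets: a vector `a` of naturals such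
that every nonempty index set `σ` contains some `i` with `a i < |C i ∩ uniqueUnion C σ|`. -/
def IsCoparking {α ι : Type*} [Fintype ι] (C : ι → Set α) (a : ι → ℕ) : Prop :=
  ∀ σ : Finset ι, σ.Nonempty → ∃ i ∈ σ, a i < (C i ∩ uniqueUnion C σ).ncard

/-- If every nonempty unique union of the family `A` of subsets of the ground set
is dependent, then `k ≤ |E| - rank M`. -/
theorem statement_0 {α : Type*} (M : Matroid α) (hE : M.E.Finite) {k : ℕ}
    (A : Fin k → Set α) (hA : ∀ i, A i ⊆ M.E)
    (hdep : ∀ σ : Finset (Fin k), σ.Nonempty → M.Dep (uniqueUnion A σ)) :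
    k ≤ M.E.ncard - M.rkNat := by
  classical
  by_contra hk
  push_neg at hk
  set B : Set α := M.exists_isBase.choose with hBdef
  have hB : M.IsBase B := M.exists_isBase.choose_spec
  have hBE : B ⊆ M.E := hB.subset_ground
  have hBfin : B.Finite := hE.subset hBE
  have hXfin : (M.E \ B).Finite := hE.diff (t := B)
  set X : Finset α := hXfin.toFinset with hXdef
  have hXcard : X.card = M.E.ncard - M.rkNat := by
    have h1 : (M.E \ B).ncard = X.card := Set.ncard_eq_toFinset_card _ hXfin
    have h2 : (M.E \ B).ncard = M.E.ncard - B.ncard := Set.ncard_diff hBE hBfin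
    have h3 : M.rkNat = B.ncard := rfl
    omega
  set v : Fin k → (X → ℚ) := fun i x => if (x : α) ∈ A i then 1 else 0 with hv
  have hnli : ¬ LinearIndependent ℚ v := by
    intro h
    have hle := h.fintype_card_le_finrank
    rw [Module.finrank_pi, Fintype.card_coe, Fintype.card_fin] at hle
    omega
  obtain ⟨g, hg0, i₀, hgi₀⟩ := Fintype.not_linearIndependent_iff.mp hnli
  set τ : Finset (Fin k) := Finset.univ.filter (fun i => g i ≠ 0) with hτdef
  have hτne : τ.Nonempty := ⟨i₀, by simp [hτdef, hgi₀]⟩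
  have hdepτ := hdep τ hτne
  have hsub : uniqueUnion A τ ⊆ B := by
    intro e he
    obtain ⟨i₁, ⟨hi₁τ, hi₁A⟩, huniq⟩ := he
    by_contra heB
    have heX : e ∈ X := by
      rw [hXdef, Set.Finite.mem_toFinset]
      exact ⟨hA i₁ hi₁A, heB⟩
    have hpt := congrFun hg0 ⟨e, heX⟩
    rw [Finset.sum_apply] at hpt
    have hsum : ∑ i, g i * (if e ∈ A i then 1 else 0) = (0 : ℚ) := by
      simpa [hv, smul_eq_mul] using hpt
    have hgi₁ : g i₁ ≠ 0 := by simpa [hτdef] using hi₁τ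
    rw [Finset.sum_eq_single i₁] at hsum
    · rw [if_pos hi₁A, mul_one] at hsum
      exact hgi₁ hsum
    · intro i _ hne
      by_cases hgi : g i = 0
      · simp [hgi]
      · have hAi : e ∉ A i := fun hAi =>
          hne (huniq i ⟨by simp [hτdef, hgi], hAi⟩)
        simp [hAi]
    · intro h; exact absurd (Finset.mem_univ i₁) h
  exact hdepτ.not_indep (hB.indep.subset hsub)
end

section
/- Let C = (C_1, …, C_g) be a cycle system for a matroid M, and let e be an element of the unique union C_{[g]} with e ∈ C_i (so e belongs to C_i and to no C_j with j ≠ i). Then the family (C_j)_{j ∈ {1,…,g}, j ≠ i} is a cycle system for the deletion M ∖ e. -/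
open Set Matroid

namespace Matroid
section Aux

variable {α : Type*} {M : Matroid α}

/-- Every cycle is contained in the ground set. -/
lemma IsCycle.subset_ground {K : Set α} (h : M.IsCycle K) : K ⊆ M.E := by
  obtain ⟨S, hS, rfl⟩ := h
  exact sUnion_subset fun c hc => (hS c hc).1.subset_ground

/-- Any element of a cycle lies in a circuit contained in the cycle. -/
lemma IsCycle.exists_circuit_mem {K : Set α} (h : M.IsCycle K) {e : α} (he : e ∈ K) :
    ∃ c, M.Circuit c ∧ e ∈ c ∧ c ⊆ K := by
  obtain ⟨S, hS, rfl⟩ := h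
  obtain ⟨c, hcS, hec⟩ := he
  exact ⟨c, hS c hcS, hec, subset_sUnion_of_mem hcS⟩

/-- A circuit of `M` contained in `R ⊆ M.E` is a circuit of `M ↾ R`. -/
lemma Circuit.circuit_restrict {c R : Set α} (hc : M.Circuit c) (hcR : c ⊆ R)
    (hR : R ⊆ M.E) : (M ↾ R).Circuit c := by
  constructor
  · rw [Matroid.restrict_dep_iff]
    exact ⟨hc.1.not_indep, hcR⟩
  · intro Y hY hYc
    rw [Matroid.restrict_dep_iff] at hY
    exact hc.2 ⟨hY.1, hY.2.trans hR⟩ hYc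

/-- If `e` lies in a circuit of `M`, then there is a base of `M` avoiding `e`. -/
lemma exists_base_not_mem {c : Set α} (hc : M.Circuit c) {e : α} (he : e ∈ c) :
    ∃ B, M.IsBase B ∧ e ∉ B := by
  have hce : c ⊆ M.E := hc.1.subset_ground
  have hI : M.Indep (c \ {e}) := by
    by_contra hdep
    have hd : M.Dep (c \ {e}) := ⟨hdep, diff_subset.trans hce⟩
    have := hc.2 hd diff_subset
    exact (this he).2 rfl
  obtain ⟨B, hB, hsub⟩ := hI.subset_isBasis_of_subset (diff_subset.trans hce)
  rw [Matroid.isBasis_ground_iff] at hB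
  refine ⟨B, hB, fun heB => ?_⟩
  have hcB : c ⊆ B := by
    intro x hx
    rcases eq_or_ne x e with rfl | hxe
    · exact heB
    · exact hsub ⟨hx, hxe⟩
  exact (hB.indep.subset hcB).not_dep hc.1

end Aux
end Matroid

/-- If `C` is a cycle system for `M` and `e ∈ C_{[g]} ∩ C i`, then the family
obtained by dropping `C i` is a cycle system for `M ∖ e`. -/
theorem statement_1 {α : Type*} {g : ℕ} (M : Matroid α) (hE : M.E.Finite)
    (C : Fin g → Set α) (hCS : M.IsCycleSystem C) (e : α) (i : Fin g)
    (he : e ∈ uniqueUnion C Finset.univ) (hei : e ∈ C i) :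
    (M.delete' {e}).IsCycleSystem (fun j : {j : Fin g // j ≠ i} => C j.1) := by
  obtain ⟨hcard, hcyc, hdep⟩ := hCS
  -- `e` belongs to `C k` only for `k = i`.
  have huniq : ∀ k, e ∈ C k → k = i := by
    obtain ⟨k, hk, hk'⟩ := he
    intro j hj
    rw [hk' j ⟨Finset.mem_univ j, hj⟩, hk' i ⟨Finset.mem_univ i, hei⟩]
  have heE : e ∈ M.E := (hcyc i).subset_ground hei
  -- the ground set of the deletion
  have hgr : (M.delete' {e}).E = M.E \ {e} := rfl
  have hRE : M.E \ {e} ⊆ M.E := diff_subset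
  -- `C j ⊆ M.E \ {e}` for `j ≠ i`
  have hCj : ∀ j : Fin g, j ≠ i → C j ⊆ M.E \ {e} := by
    intro j hj x hx
    refine ⟨(hcyc j).subset_ground hx, fun hxe => ?_⟩
    exact hj (huniq j (by rwa [← (mem_singleton_iff.mp hxe)]))
  -- rank is preserved
  have hrk : (M.delete' {e}).rkNat = M.rkNat := by
    obtain ⟨c, hc, hec, -⟩ := (hcyc i).exists_circuit_mem hei
    obtain ⟨B, hB, heB⟩ := exists_base_not_mem hc hec
    have hBbasis : M.IsBasis B (M.E \ {e}) :=
      Matroid.IsBase.isBasis_of_subset hRE hB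
        (subset_diff_singleton hB.subset_ground heB)
    have hBbase : (M.delete' {e}).IsBase B := hBbasis.restrict_isBase
    have hB1 := (M.delete' {e}).exists_isBase.choose_spec
    have hB2 := M.exists_isBase.choose_spec
    exact (hBbase.ncard_eq_ncard_of_isBase hB1).symm.trans
      ((hB.ncard_eq_ncard_of_isBase hB2).symm ▸ hB.ncard_eq_ncard_of_isBase hB2)
  refine ⟨?_, ?_, ?_⟩
  · -- cardinality
    have h1 : Fintype.card {j : Fin g // j ≠ i} = g - 1 := by
      rw [Fintype.card_subtype_compl (· = i)]
      simp
    have h2 : (M.E \ {e}).ncard = M.E.ncard - 1 :=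
      Set.ncard_diff_singleton_of_mem heE
    have h3 : g = M.E.ncard - M.rkNat := by simpa using hcard
    have h4 : 0 < g := Fin.pos i
    have h5 : M.rkNat ≤ M.E.ncard := by omega
    rw [h1, hgr, hrk, h2]
    omega
  · -- cycles
    rintro ⟨j, hj⟩
    obtain ⟨S, hS, hSeq⟩ := hcyc j
    refine ⟨S, fun c hc => ?_, hSeq⟩
    have hsub : c ⊆ M.E \ {e} := (hSeq ▸ subset_sUnion_of_mem hc).trans (hCj j hj)
    exact (hS c hc).circuit_restrict hsub hRE
  · -- dependence of unique unions
    intro σ hσ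
    set τ : Finset (Fin g) := σ.map ⟨Subtype.val, Subtype.val_injective⟩ with hτ
    have hττ : ∀ k, k ∈ τ ↔ ∃ h : k ≠ i, (⟨k, h⟩ : {j : Fin g // j ≠ i}) ∈ σ := by
      intro k
      simp only [hτ, Finset.mem_map, Function.Embedding.coeFn_mk]
      constructor
      · rintro ⟨⟨k', hk'⟩, hmem, rfl⟩; exact ⟨hk', hmem⟩
      · rintro ⟨h, hmem⟩; exact ⟨⟨k, h⟩, hmem, rfl⟩
    have hequ : uniqueUnion (fun j : {j : Fin g // j ≠ i} => C j.1) σ = uniqueUnion C τ := by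
      ext x
      simp only [uniqueUnion, mem_setOf_eq]
      constructor
      · rintro ⟨⟨j, hj⟩, ⟨hjσ, hjx⟩, hju⟩
        refine ⟨j, ⟨(hττ j).mpr ⟨hj, hjσ⟩, hjx⟩, ?_⟩
        rintro k ⟨hkτ, hkx⟩
        obtain ⟨hk, hkσ⟩ := (hττ k).mp hkτ
        exact congrArg Subtype.val (hju ⟨k, hk⟩ ⟨hkσ, hkx⟩)
      · rintro ⟨k, ⟨hkτ, hkx⟩, hku⟩
        obtain ⟨hk, hkσ⟩ := (hττ k).mp hkτ
        refine ⟨⟨k, hk⟩, ⟨hkσ, hkx⟩, ?_⟩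
        rintro ⟨j, hj⟩ ⟨hjσ, hjx⟩
        exact Subtype.ext (hku j ⟨(hττ j).mpr ⟨hj, hjσ⟩, hjx⟩)
    have hτne : τ.Nonempty := hσ.map
    have hdepτ := hdep τ hτne
    rw [hequ, Matroid.delete', Matroid.restrict_dep_iff]
    refine ⟨hdepτ.not_indep, fun x hx => ?_⟩
    obtain ⟨k, ⟨hkτ, hkx⟩, -⟩ := hx
    obtain ⟨hk, -⟩ := (hττ k).mp hkτ
    exact hCj k hk hkx
end

section
/- Let C = (C_1, …, C_g) be a cycle system for a matroid M, and let e be any non-loop element of M. Then the family (C_1 ∖ {e}, …, C_g ∖ {e}) is a cycle system for the contraction M / e. -/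
open Set Matroid

namespace Matroid

variable {α : Type*}

/-- Deletion of a set of elements from a matroid. -/
def deleteSet (M : Matroid α) (D : Set α) : Matroid α := M ↾ (M.E \ D)

/-- Contraction of a set of elements in a matroid, defined via duality. -/
def contractSet (M : Matroid α) (X : Set α) : Matroid α := (M✶.deleteSet X)✶

end Matroid

namespace MyAux

variable {α : Type*} {M : Matroid α} {e x : α} {B I X K W D : Set α}

lemma contract_ground (M : Matroid α) (X : Set α) : (M.contractSet X).E = M.E \ X := rfl

/-- minimal dep subset exists in the finite case -/
lemma exists_min_dep (N : Matroid α) : ∀ n (W : Set α), W.Finite → W.ncard ≤ n → N.Dep W →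
    ∃ D, D ⊆ W ∧ Minimal N.Dep D := by
  intro n
  induction n with
  | zero =>
    intro W hfin hcard hdep
    rw [Nat.le_zero, Set.ncard_eq_zero hfin] at hcard
    subst hcard
    exact absurd hdep N.empty_indep.not_dep
  | succ n ih =>
    intro W hfin hcard hdep
    by_cases h : ∀ D, N.Dep D → D ⊆ W → W ⊆ D
    · exact ⟨W, Subset.rfl, hdep, fun D hD hDW => h D hD hDW⟩
    · push_neg at h
      obtain ⟨D, hDdep, hDW, hne⟩ := h
      have hss : D ⊂ W := ⟨hDW, hne⟩
      have : D.ncard < W.ncard := Set.ncard_lt_ncard hss hfin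
      obtain ⟨D', hD'D, hmin⟩ := ih D (hfin.subset hDW) (by omega) hDdep
      exact ⟨D', hD'D.trans hDW, hmin⟩

/-- a basis of a set containing a base is a base -/
lemma basis_base (hB₀ : M.IsBase B) (hBX : B ⊆ X) (hI : M.IsBasis I X) : M.IsBase I := by
  by_contra hnb
  obtain ⟨f, hf, hfI⟩ := hI.indep.exists_insert_of_not_isBase hnb hB₀
  exact (hI.insert_dep ⟨hBX hf.1, hf.2⟩).not_indep hfI

lemma contract_base_iff (heE : e ∈ M.E) (he : M.Indep {e}) :
    (M.contractSet {e}).IsBase B ↔ B ⊆ M.E \ {e} ∧ M.IsBase (insert e B) := by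
  obtain ⟨Bm, hBm, heBm⟩ := he.exists_isBase_superset
  have heBm' : e ∈ Bm := heBm rfl
  have hdualbase : M✶.IsBase (M.E \ Bm) := hBm.compl_isBase_dual
  have hsub0 : M.E \ Bm ⊆ M.E \ {e} := fun y hy => ⟨hy.1, fun h => hy.2 (h ▸ heBm')⟩
  have hgr : M.E \ {e} ⊆ M✶.E := by rw [dual_ground]; exact diff_subset
  have hbasis_iff : ∀ Y, M✶.IsBasis Y (M.E \ {e}) ↔ M✶.IsBase Y ∧ Y ⊆ M.E \ {e} := by
    intro Y
    constructor
    · intro h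
      exact ⟨basis_base hdualbase hsub0 h, h.subset⟩
    · rintro ⟨hY, hYsub⟩
      rw [isBasis_iff hgr]
      exact ⟨hY.indep, hYsub, fun J hJ hYJ _ => hY.eq_of_subset_indep hJ hYJ⟩
  have hcompl : ∀ B : Set α, B ⊆ M.E \ {e} → M.E \ ((M.E \ {e}) \ B) = insert e B := by
    intro B hBsub
    ext y
    simp only [mem_diff, mem_insert_iff, mem_singleton_iff]
    constructor
    · rintro ⟨hyE, hy⟩
      by_cases hye : y = e
      · exact Or.inl hye
      · right; by_contra hyB; exact hy ⟨⟨hyE, hye⟩, hyB⟩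
    · rintro (rfl | hyB)
      · exact ⟨heE, fun h => h.1.2 rfl⟩
      · exact ⟨(hBsub hyB).1, fun h => h.2 hyB⟩
  rw [Matroid.contractSet, Matroid.deleteSet, dual_isBase_iff']
  simp only [restrict_ground_eq, dual_ground, isBase_restrict_iff']
  rw [isBasis'_iff_isBasis hgr, hbasis_iff]
  constructor
  · rintro ⟨⟨hbase, -⟩, hBsub⟩
    rw [dual_isBase_iff', hcompl B hBsub] at hbase
    exact ⟨hBsub, hbase.1⟩
  · rintro ⟨hBsub, hBbase⟩
    refine ⟨⟨?_, diff_subset⟩, hBsub⟩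
    rw [dual_isBase_iff', hcompl B hBsub]
    exact ⟨hBbase, (diff_subset : (M.E \ {e}) \ B ⊆ M.E \ {e}).trans diff_subset⟩

lemma contract_indep_iff (heE : e ∈ M.E) (he : M.Indep {e}) :
    (M.contractSet {e}).Indep I ↔ I ⊆ M.E \ {e} ∧ M.Indep (insert e I) := by
  rw [indep_iff]
  constructor
  · rintro ⟨B, hB, hIB⟩
    rw [contract_base_iff heE he] at hB
    exact ⟨hIB.trans hB.1, hB.2.indep.subset (insert_subset_insert hIB)⟩
  · rintro ⟨hIsub, hIe⟩
    obtain ⟨B₂, hB₂, hsub⟩ := hIe.exists_isBase_superset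
    have heB₂ : e ∈ B₂ := hsub (mem_insert e I)
    refine ⟨B₂ \ {e}, ?_, ?_⟩
    · rw [contract_base_iff heE he]
      constructor
      · exact fun y hy => ⟨hB₂.subset_ground hy.1, hy.2⟩
      · rwa [insert_diff_singleton, insert_eq_of_mem heB₂]
    · exact fun y hy => ⟨hsub (Or.inr hy), (hIsub hy).2⟩

lemma contract_dep_iff (heE : e ∈ M.E) (he : M.Indep {e}) :
    (M.contractSet {e}).Dep X ↔ X ⊆ M.E \ {e} ∧ M.Dep (insert e X) := by
  rw [dep_iff, contract_indep_iff heE he, contract_ground]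
  constructor
  · rintro ⟨h1, h2⟩
    refine ⟨h2, ?_⟩
    rw [dep_iff]
    refine ⟨fun hi => h1 ⟨h2, hi⟩, insert_subset heE (h2.trans diff_subset)⟩
  · rintro ⟨h1, h2⟩
    exact ⟨fun h => h2.not_indep h.2, h1⟩

lemma cycle_contract (hE : M.E.Finite) (heE : e ∈ M.E) (he : M.Indep {e})
    (hK : M.IsCycle K) : (M.contractSet {e}).IsCycle (K \ {e}) := by
  obtain ⟨S, hS, rfl⟩ := hK
  refine ⟨{D | (M.contractSet {e}).Circuit D ∧ D ⊆ ⋃₀ S \ {e}}, fun D hD => hD.1, ?_⟩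
  apply subset_antisymm
  · -- each x in K \ {e} is in some circuit of the contraction inside K \ {e}
    rintro x ⟨hxK, hxe'⟩
    have hxe : x ≠ e := fun h => hxe' (h ▸ rfl)
    obtain ⟨Cx, hCxS, hxCx⟩ := hxK
    have hC : Minimal M.Dep Cx := hS Cx hCxS
    have hCE : Cx ⊆ M.E := hC.prop.subset_ground
    have hxE : x ∈ M.E := hCE hxCx
    -- Cx \ {x} is independent
    have h1 : M.Indep (Cx \ {x}) := by
      rw [← not_dep_iff (diff_subset.trans hCE)]
      intro hdep
      exact ((hC.2 hdep diff_subset) hxCx).2 rfl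
    have hxcl : x ∈ M.closure (Cx \ {x}) := by
      have hd : M.Dep (insert x (Cx \ {x})) := by
        rw [insert_diff_singleton, insert_eq_of_mem hxCx]; exact hC.prop
      exact (h1.insert_dep_iff.mp hd).1
    -- basis I' of insert e ((Cx \ {x}) \ {e}) containing e
    set X₀ := insert e ((Cx \ {x}) \ {e}) with hX₀
    have hX₀E : X₀ ⊆ M.E := insert_subset heE ((diff_subset.trans diff_subset).trans hCE)
    obtain ⟨I', hI', heI'⟩ := he.subset_isBasis_of_subset
      (singleton_subset_iff.mpr (mem_insert e _)) hX₀E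
    have heI'' : e ∈ I' := heI' rfl
    have hI'indep : M.Indep I' := hI'.indep
    have hI'E : I' ⊆ M.E := hI'indep.subset_ground
    -- Cx \ {x} ⊆ closure I'
    have hclsub : Cx \ {x} ⊆ M.closure I' := by
      intro y hy
      by_cases hye : y = e
      · exact hye ▸ (M.subset_closure I' hI'E heI'')
      · have hyX₀ : y ∈ X₀ := Or.inr ⟨hy, hye⟩
        by_cases hyI' : y ∈ I'
        · exact M.subset_closure I' hI'E hyI'
        · exact (hI'indep.insert_dep_iff.mp (hI'.insert_dep ⟨hyX₀, hyI'⟩)).1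
    have hxclI' : x ∈ M.closure I' :=
      (M.closure_subset_closure_of_subset_closure hclsub) hxcl
    have hxI' : x ∉ I' := by
      intro hx
      rcases hI'.subset hx with h | h
      · exact hxe h
      · exact h.1.2 rfl
    have hdepxI' : M.Dep (insert x I') := hI'indep.insert_dep_iff.mpr ⟨hxclI', hxI'⟩
    -- W := insert x (I' \ {e}) is dep in the contraction
    set J := I' \ {e} with hJ
    have hI'eq : insert e J = I' := by rw [hJ, insert_diff_singleton, insert_eq_of_mem heI'']
    set W := insert x J with hW
    have hWsub : W ⊆ M.E \ {e} := by
      rw [hW]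
      exact insert_subset ⟨hxE, hxe⟩ (fun y hy => ⟨hI'E hy.1, hy.2⟩)
    have hWdep : (M.contractSet {e}).Dep W := by
      rw [contract_dep_iff heE he]
      refine ⟨hWsub, ?_⟩
      rwa [hW, insert_comm, hI'eq]
    obtain ⟨D, hDW, hDmin⟩ := exists_min_dep (M.contractSet {e}) W.ncard W
      (hE.subset (hWsub.trans diff_subset)) le_rfl hWdep
    have hxD : x ∈ D := by
      by_contra hxD
      have hDJ : D ⊆ J := fun y hy => ((hDW hy).resolve_left (fun h => hxD (h ▸ hy)))
      have : (M.contractSet {e}).Indep D := by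
        rw [contract_indep_iff heE he]
        refine ⟨fun y hy => ⟨hI'E (hDJ hy).1, (hDJ hy).2⟩, ?_⟩
        exact hI'indep.subset ((insert_subset_insert hDJ).trans hI'eq.subset)
      exact hDmin.prop.not_indep this
    refine ⟨D, ⟨hDmin, ?_⟩, hxD⟩
    intro y hy
    rcases hDW hy with rfl | hyJ
    · exact ⟨⟨Cx, hCxS, hxCx⟩, hxe⟩
    · rcases hI'.subset hyJ.1 with h | h
      · exact absurd h hyJ.2
      · exact ⟨⟨Cx, hCxS, h.1.1⟩, h.2⟩
  · rintro y ⟨D, hD, hyD⟩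
    exact hD.2 hyD

end MyAux

/-- If `C` is a cycle system for `M` and `e` is a non-loop element of `M`, then
`(C_1 \ {e}, …, C_g \ {e})` is a cycle system for the contraction `M / e`. -/
theorem statement_2 {α : Type*} {g : ℕ} (M : Matroid α) (hE : M.E.Finite)
    (C : Fin g → Set α) (hCS : M.IsCycleSystem C) (e : α)
    (heE : e ∈ M.E) (hloop : ¬ M.Dep {e}) :
    (M.contractSet {e}).IsCycleSystem (fun j => C j \ {e}) := by
  have he : M.Indep {e} := (not_dep_iff (singleton_subset_iff.mpr heE)).mp hloop
  refine ⟨?_, fun j => MyAux.cycle_contract hE heE he (hCS.2.1 j), ?_⟩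
  · have hcard := hCS.1
    obtain ⟨hBc1, hBc2⟩ := (MyAux.contract_base_iff heE he).mp
      ((M.contractSet {e}).exists_isBase.choose_spec)
    have hBcfin : (M.contractSet {e}).exists_isBase.choose.Finite :=
      hE.subset (hBc1.trans diff_subset)
    have henotin : e ∉ (M.contractSet {e}).exists_isBase.choose := fun h => (hBc1 h).2 rfl
    have hrk : M.rkNat = (M.contractSet {e}).rkNat + 1 := by
      have h2 := M.exists_isBase.choose_spec.ncard_eq_ncard_of_isBase hBc2
      rw [Matroid.rkNat, Matroid.rkNat, h2, Set.ncard_insert_of_notMem henotin hBcfin]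
    have hEc : (M.contractSet {e}).E.ncard = M.E.ncard - 1 := by
      rw [MyAux.contract_ground, Set.ncard_diff_singleton_of_mem heE]
    omega
  · intro σ hσ
    have hU := hCS.2.2 σ hσ
    have hUE := hU.subset_ground
    have hEq : uniqueUnion (fun j => C j \ {e}) σ = uniqueUnion C σ \ {e} := by
      ext x
      by_cases hx : x = e
      · subst hx
        simp [uniqueUnion, ExistsUnique]
      · simp only [uniqueUnion, mem_setOf_eq, mem_diff, mem_singleton_iff, hx,
          not_false_iff, and_true]
    rw [hEq, MyAux.contract_dep_iff heE he]
    refine ⟨diff_subset_diff_left hUE, hU.superset ?_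
      (insert_subset heE (diff_subset.trans hUE))⟩
    intro y hy
    by_cases hyne : y = e
    · exact mem_insert_iff.mpr (Or.inl hyne)
    · exact Or.inr ⟨hy, hyne⟩
end

section
/- Let C = (C_1, …, C_g) be a cycle system for a matroid M. Then for every circuit D of M there exists a subset σ ⊆ {1,…,g} such that the unique union C_σ equals D. -/
open Set Matroid

section AuxLemmas

/-- A cycle is contained in the ground set. -/
private lemma isCycle_subset_ground {α : Type*} {M : Matroid α} {K : Set α}
    (h : M.IsCycle K) : K ⊆ M.E := by
  obtain ⟨S, hS, rfl⟩ := h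
  exact sUnion_subset fun Z hZ => ((hS Z hZ).1).2

/-- Unique unions commute with reindexing along a subtype inclusion. -/
private lemma uniqueUnion_map {α ι : Type*} (C : ι → Set α) (p : ι → Prop)
    (σ : Finset {j // p j}) :
    uniqueUnion (fun j : {j // p j} => C j.val) σ
      = uniqueUnion C (σ.map (Function.Embedding.subtype p)) := by
  ext x
  simp only [uniqueUnion, mem_setOf_eq]
  constructor
  · rintro ⟨j, ⟨hjσ, hxj⟩, hj⟩
    refine ⟨j.val, ⟨Finset.mem_map.2 ⟨j, hjσ, rfl⟩, hxj⟩, ?_⟩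
    rintro k ⟨hkσ, hxk⟩
    obtain ⟨k', hk', rfl⟩ := Finset.mem_map.1 hkσ
    have : k' = j := hj k' ⟨hk', hxk⟩
    simpa [Function.Embedding.coe_subtype] using congrArg Subtype.val this
  · rintro ⟨k, ⟨hkσ, hxk⟩, hk⟩
    obtain ⟨k', hk', rfl⟩ := Finset.mem_map.1 hkσ
    simp only [Function.Embedding.coe_subtype] at hxk
    refine ⟨k', ⟨hk', hxk⟩, ?_⟩
    rintro j ⟨hjσ, hxj⟩
    have : j.val = (Function.Embedding.subtype p) k' :=
      hk j.val ⟨Finset.mem_map.2 ⟨j, hjσ, rfl⟩, hxj⟩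
    exact Subtype.ext (by simpa [Function.Embedding.coe_subtype] using this)

private theorem aux (n : ℕ) :
    ∀ {α ι : Type*} [Fintype ι] (M : Matroid α), M.E.Finite → Fintype.card ι = n →
      ∀ (C : ι → Set α), M.IsCycleSystem C → ∀ D : Set α, M.Circuit D →
      ∃ σ : Finset ι, uniqueUnion C σ = D := by
  induction n using Nat.strong_induction_on with
  | _ n ih =>
  intro α ι _ M hE hn C hCS D hD
  classical
  obtain ⟨hcardsys, hcyc, hdep⟩ := hCS
  by_cases hex : ∃ (i : ι) (e : α), e ∉ D ∧ e ∈ C i ∧ ∀ j, e ∈ C j → j = i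
  · -- Case B : delete `e` and drop index `i`, recurse.
    obtain ⟨i, e, heD, heCi, huniq⟩ := hex
    -- a circuit of `M` through `e` inside `C i`
    obtain ⟨S, hS, hCieq⟩ := hcyc i
    rw [hCieq] at heCi
    obtain ⟨Z, hZS, heZ⟩ := heCi
    have hZ : M.Circuit Z := hS Z hZS
    have heE : e ∈ M.E := hZ.1.2 heZ
    -- `Z \ {e}` is independent
    have hZe : M.Indep (Z \ {e}) := by
      by_contra hni
      have hdepZe : M.Dep (Z \ {e}) := ⟨hni, diff_subset.trans hZ.1.2⟩
      exact (hZ.2 hdepZe diff_subset heZ).2 rfl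
    obtain ⟨B, hB, hZB⟩ := hZe.exists_isBase_superset
    have heB : e ∉ B := by
      intro heB
      have hZsub : Z ⊆ B := by
        intro y hy
        rcases eq_or_ne y e with rfl | hne
        · exact heB
        · exact hZB ⟨hy, hne⟩
      exact hZ.1.1 (hB.indep.subset hZsub)
    set X : Set α := M.E \ {e} with hXdef
    have hXE : X ⊆ M.E := diff_subset
    set M' : Matroid α := M ↾ X with hM'def
    have hM'E : M'.E = X := rfl
    have hBX : B ⊆ X := subset_diff_singleton hB.subset_ground heB
    have hB' : M'.IsBase B := by
      rw [isBase_iff_maximal_indep]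
      refine ⟨restrict_indep_iff.2 ⟨hB.indep, hBX⟩, fun J hJ hBJ => ?_⟩
      exact (hB.eq_of_subset_indep (restrict_indep_iff.1 hJ).1 hBJ).symm.subset
    have hrk : M'.rkNat = M.rkNat := by
      have h1 : M'.IsBase M'.exists_isBase.choose := M'.exists_isBase.choose_spec
      have h2 : M.IsBase M.exists_isBase.choose := M.exists_isBase.choose_spec
      have e1 : M'.exists_isBase.choose.ncard = B.ncard := h1.ncard_eq_ncard_of_isBase hB'
      have e2 : B.ncard = M.exists_isBase.choose.ncard := hB.ncard_eq_ncard_of_isBase h2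
      exact e1.trans e2
    have hXncard : X.ncard = M.E.ncard - 1 := ncard_diff_singleton_of_mem heE
    have hnpos : 0 < n := by
      rw [← hn]
      exact Fintype.card_pos_iff.2 ⟨i⟩
    have hnr : n = M.E.ncard - M.rkNat := hn ▸ hcardsys
    have hrkle : M.rkNat < M.E.ncard := by omega
    -- new index type
    let C' : {j : ι // j ≠ i} → Set α := fun j => C j.val
    have hcard' : Fintype.card {j : ι // j ≠ i} = n - 1 := by
      have h1 : Fintype.card {j : ι // ¬ (j = i)}
          = Fintype.card ι - Fintype.card {j : ι // j = i} :=
        Fintype.card_subtype_compl (· = i)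
      rw [Fintype.card_subtype_eq] at h1
      calc Fintype.card {j : ι // j ≠ i} = Fintype.card {j : ι // ¬ (j = i)} := rfl
        _ = Fintype.card ι - 1 := h1
        _ = n - 1 := by rw [hn]
    have hCS' : M'.IsCycleSystem C' := by
      refine ⟨?_, ?_, ?_⟩
      · rw [hcard', hM'E, hrk, hXncard]
        omega
      · rintro ⟨j, hj⟩
        obtain ⟨Sj, hSj, hCjeq⟩ := hcyc j
        refine ⟨Sj, fun Z' hZ' => ?_, hCjeq⟩
        have hZ'c := hSj Z' hZ'
        have hZ'Cj : Z' ⊆ C j := hCjeq ▸ subset_sUnion_of_mem hZ'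
        have hZ'X : Z' ⊆ X := by
          intro y hy
          refine ⟨hZ'c.1.2 hy, ?_⟩
          intro hye
          rw [mem_singleton_iff] at hye
          subst hye
          exact hj (huniq j (hZ'Cj hy))
        constructor
        · exact restrict_dep_iff.2 ⟨hZ'c.1.1, hZ'X⟩
        · intro y hy hysub
          have hyd : M.Dep y :=
            ⟨(restrict_dep_iff.1 hy).1, ((restrict_dep_iff.1 hy).2).trans hXE⟩
          exact hZ'c.2 hyd hysub
      · intro σ' hσ'
        have hmap := uniqueUnion_map C (fun j => j ≠ i) σ'
        have hne : (σ'.map (Function.Embedding.subtype _)).Nonempty := hσ'.map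
        have hdepM : M.Dep (uniqueUnion C (σ'.map (Function.Embedding.subtype _))) :=
          hdep _ hne
        have hUX : uniqueUnion C (σ'.map (Function.Embedding.subtype _)) ⊆ X := by
          intro x hx
          obtain ⟨j, ⟨hjm, hxj⟩, _⟩ := hx
          obtain ⟨j', _, rfl⟩ := Finset.mem_map.1 hjm
          simp only [Function.Embedding.coe_subtype] at hxj
          refine ⟨(isCycle_subset_ground (hcyc _)) hxj, ?_⟩
          intro hxe
          rw [mem_singleton_iff] at hxe
          subst hxe
          exact j'.2 (huniq _ hxj)
        show M'.Dep (uniqueUnion C' σ')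
        rw [show uniqueUnion C' σ'
              = uniqueUnion C (σ'.map (Function.Embedding.subtype _)) from hmap]
        exact restrict_dep_iff.2 ⟨hdepM.1, hUX⟩
    have hD' : M'.Circuit D := by
      constructor
      · refine restrict_dep_iff.2 ⟨hD.1.1, ?_⟩
        intro y hy
        refine ⟨hD.1.2 hy, ?_⟩
        intro hye
        rw [mem_singleton_iff] at hye
        subst hye
        exact heD hy
      · intro y hy hysub
        exact hD.2 ⟨(restrict_dep_iff.1 hy).1, ((restrict_dep_iff.1 hy).2).trans hXE⟩ hysub
    have hfin' : M'.E.Finite := hE.subset hXE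
    obtain ⟨σ', hσ'⟩ := ih (n - 1) (by omega) M' hfin' hcard' C' hCS' D hD'
    refine ⟨σ'.map (Function.Embedding.subtype _), ?_⟩
    rw [← uniqueUnion_map]
    exact hσ'
  · -- Case C : `uniqueUnion C univ ⊆ D`, hence equals `D` by minimality.
    push_neg at hex
    rcases isEmpty_or_nonempty ι with hempty | hnonempty
    · -- corank 0: the ground set is independent, contradicting `M.Dep D`.
      exfalso
      have h0 : Fintype.card ι = 0 := Fintype.card_eq_zero
      have hB := M.exists_isBase.choose_spec
      have hle : M.E.ncard ≤ M.rkNat := by omega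
      have hBE : M.exists_isBase.choose = M.E :=
        eq_of_subset_of_ncard_le hB.subset_ground hle hE
      have hEindep : M.Indep M.E := hBE ▸ hB.indep
      exact hD.1.1 (hEindep.subset hD.1.2)
    · have hsub : uniqueUnion C Finset.univ ⊆ D := by
        intro x hx
        by_contra hxD
        obtain ⟨i, ⟨_, hxi⟩, hiu⟩ := hx
        obtain ⟨j, hxj, hji⟩ := hex i x hxD hxi
        exact hji (hiu j ⟨Finset.mem_univ j, hxj⟩)
      have hdepU : M.Dep (uniqueUnion C Finset.univ) := hdep _ Finset.univ_nonempty
      exact ⟨Finset.univ, hsub.antisymm (hD.2 hdepU hsub)⟩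

end AuxLemmas

/-- Every circuit of a matroid with a cycle system is a unique union of a
subfamily of the cycle system. -/
theorem statement_3 {α : Type*} {g : ℕ} (M : Matroid α) (hE : M.E.Finite)
    (C : Fin g → Set α) (hCS : M.IsCycleSystem C) (D : Set α) (hD : M.Circuit D) :
    ∃ σ : Finset (Fin g), uniqueUnion C σ = D :=
  aux (Fintype.card (Fin g)) M hE rfl C hCS D hD
end

section
/- Let C = (C_1, …, C_g) be a cycle system for a matroid M on ground set E. An element e ∈ E is a non-coloop of M (i.e., e is contained in some circuit of M) if and only if e ∈ C_i for some i ∈ {1,…,g}. -/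
open Set Matroid

/-- An element of the ground set lies in some circuit of `M` (i.e. is a
non-coloop) iff it lies in some member of the cycle system. -/
theorem statement_4 {α : Type*} {g : ℕ} (M : Matroid α) (hE : M.E.Finite)
    (C : Fin g → Set α) (hCS : M.IsCycleSystem C) (e : α) (he : e ∈ M.E) :
    (∃ D, M.Circuit D ∧ e ∈ D) ↔ ∃ i, e ∈ C i := by
  classical
  constructor
  · rintro ⟨D, hD, heD⟩
    by_contra hnot
    push_neg at hnot
    -- D \ {e} is independent
    have hDE : D ⊆ M.E := hD.1.subset_ground
    have hindep : M.Indep (D \ {e}) := by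
      rw [← M.not_dep_iff ((diff_subset).trans hDE)]
      intro hdep
      have := hD.2 hdep diff_subset
      exact (this heD).2 rfl
    obtain ⟨B, hB, hDB⟩ := hindep.exists_isBase_superset
    have heB : e ∉ B := by
      intro heB
      have hDsub : D ⊆ B := by
        intro x hx
        by_cases hxe : x = e
        · exact hxe ▸ heB
        · exact hDB ⟨hx, hxe⟩
      exact hD.1.not_indep (hB.indep.subset hDsub)
    -- cardinality of E \ B is g
    have hBE : B ⊆ M.E := hB.subset_ground
    have hBcard : B.ncard = M.rkNat :=
      hB.ncard_eq_ncard_of_isBase M.exists_isBase.choose_spec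
    have hdiffcard : (M.E \ B).ncard = g := by
      rw [Set.ncard_diff hBE (hE.subset hBE), hBcard, ← hCS.1, Fintype.card_fin]
    have hfin : (M.E \ B).Finite := hE.diff (t := B)
    set T : Finset α := (hfin.toFinset).erase e with hT
    have heEB : e ∈ hfin.toFinset := by simp [he, heB]
    have htfc : hfin.toFinset.card = g := by
      rw [← Set.ncard_eq_toFinset_card _ hfin]; exact hdiffcard
    have hTcard : T.card = g - 1 := by
      rw [hT, Finset.card_erase_of_mem heEB, htfc]
    have hg1 : 1 ≤ g := by
      have : 0 < hfin.toFinset.card := Finset.card_pos.2 ⟨e, heEB⟩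
      omega
    -- the injection
    have key : Function.Injective (fun (σ : Finset (Fin g)) =>
        fun (x : T) => ∑ i ∈ σ, (if (x : α) ∈ C i then (1 : ZMod 2) else 0)) := by
      intro σ σ' hss
      by_contra hne
      have hτ : (symmDiff σ σ').Nonempty := by
        rw [Finset.nonempty_iff_ne_empty]
        intro h
        exact hne (symmDiff_eq_bot.1 h)
      have hdep := hCS.2.2 _ hτ
      -- uniqueUnion not contained in B
      have hnsub : ¬ (uniqueUnion C (symmDiff σ σ') ⊆ B) := by
        intro hsub
        exact hdep.not_indep (hB.indep.subset hsub)
      obtain ⟨x, hxU, hxB⟩ := Set.not_subset.1 hnsub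
      have hxE : x ∈ M.E := hdep.subset_ground hxU
      obtain ⟨i₀, ⟨hi₀τ, hxi₀⟩, huniq⟩ := hxU
      have hxe : x ≠ e := fun h => hnot i₀ (h ▸ hxi₀)
      have hxT : x ∈ T := by
        rw [hT, Finset.mem_erase]
        exact ⟨hxe, hfin.mem_toFinset.2 ⟨hxE, hxB⟩⟩
      set a : Fin g → ZMod 2 := fun i => if x ∈ C i then 1 else 0 with ha
      -- sum over symmdiff is 1
      have hfilter : (symmDiff σ σ').filter (fun i => x ∈ C i) = {i₀} := by
        apply Finset.eq_singleton_iff_unique_mem.2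
        refine ⟨Finset.mem_filter.2 ⟨hi₀τ, hxi₀⟩, fun j hj => ?_⟩
        obtain ⟨hj1, hj2⟩ := Finset.mem_filter.1 hj
        exact huniq j ⟨hj1, hj2⟩
      have hsum1 : ∑ i ∈ symmDiff σ σ', a i = 1 := by
        simp only [ha, Finset.sum_boole, hfilter]
        simp
      -- sum over symmdiff is 0
      have hpt : ∑ i ∈ σ, a i = ∑ i ∈ σ', a i := by
        have := congrFun hss (⟨x, hxT⟩ : T)
        simpa [ha] using this
      have hsd : symmDiff σ σ' = (σ ∪ σ') \ (σ ∩ σ') :=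
        symmDiff_eq_sup_sdiff_inf σ σ'
      have hui : ∑ i ∈ σ ∪ σ', a i + ∑ i ∈ σ ∩ σ', a i = ∑ i ∈ σ, a i + ∑ i ∈ σ', a i :=
        Finset.sum_union_inter
      have hsub2 : ∑ i ∈ (σ ∪ σ') \ (σ ∩ σ'), a i
          = ∑ i ∈ σ ∪ σ', a i - ∑ i ∈ σ ∩ σ', a i :=
        Finset.sum_sdiff_eq_sub (Finset.inter_subset_union)
      have htwo : (2 : ZMod 2) = 0 := by decide
      have hzero : ∑ i ∈ symmDiff σ σ', a i = 0 := by
        rw [hsd, hsub2]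
        linear_combination hui + hpt + (∑ i ∈ σ', a i - ∑ i ∈ σ ∩ σ', a i) * htwo
      rw [hsum1] at hzero
      exact one_ne_zero hzero
    have hcard := Fintype.card_le_of_injective _ key
    simp only [Fintype.card_finset, Fintype.card_fin, Fintype.card_fun, ZMod.card,
      Fintype.card_coe, hTcard] at hcard
    exact absurd hcard (not_le.2 (Nat.pow_lt_pow_right one_lt_two (by omega)))
  · rintro ⟨i, hi⟩
    obtain ⟨S, hS, hCi⟩ := hCS.2.1 i
    rw [hCi] at hi
    obtain ⟨D, hDS, heD⟩ := hi
    exact ⟨D, hS D hDS, heD⟩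
end

section
/- Let C = (C_1, …, C_g) be a cycle system for a matroid M, and suppose that for some i ∈ {1,…,g} the set C_{[g]} ∩ C_i contains a circuit K of M, where C_{[g]} is the unique union over all of {1,…,g}. Then: (a) every circuit D of M with D ∩ K ≠ ∅ satisfies D = K; and (b) the family (C_j)_{j ≠ i} is a cycle system for the deletion M ∖ K. -/
open Set Matroid

/-- Any finite set that meets the unique union of every nonempty subfamily of a family
indexed by `s` has cardinality at least `s.card`. -/
lemma hit_lemma {α ι : Type*} [DecidableEq ι] (Cf : ι → Set α) (n : ℕ) :
    ∀ (s : Finset ι), s.card = n → ∀ (T : Set α), T.Finite →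
      (∀ σ : Finset ι, σ.Nonempty → σ ⊆ s → (T ∩ uniqueUnion Cf σ).Nonempty) →
      n ≤ T.ncard := by
  induction n with
  | zero => intro _ _ _ _ _; exact Nat.zero_le _
  | succ n ih =>
    intro s hsc T hTfin hhit
    have hs : s.Nonempty := Finset.card_pos.mp (by omega)
    obtain ⟨t, ht⟩ := hhit s hs subset_rfl
    obtain ⟨htT, hU⟩ := ht
    obtain ⟨i0, ⟨hi0s, hi0C⟩, huniq⟩ := hU
    have hkey : n ≤ (T \ {t}).ncard := by
      refine ih (s.erase i0) (by rw [Finset.card_erase_of_mem hi0s, hsc]; rfl) (T \ {t})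
        (hTfin.diff) ?_
      intro σ hσ hσsub
      obtain ⟨u, huT, hu⟩ := hhit σ hσ (hσsub.trans (Finset.erase_subset _ _))
      refine ⟨u, ⟨huT, ?_⟩, hu⟩
      simp only [mem_singleton_iff]
      rintro rfl
      obtain ⟨j, ⟨hjσ, hjC⟩, -⟩ := hu
      have hji : j = i0 := huniq j ⟨(Finset.erase_subset _ _) (hσsub hjσ), hjC⟩
      exact (Finset.mem_erase.mp (hσsub hjσ)).1 hji
    have := Set.ncard_diff_singleton_add_one htT hTfin
    omega

/-- If `C_{[g]} ∩ C i` contains a circuit `K`, then every circuit meeting `K`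
equals `K`, and dropping `C i` yields a cycle system for `M ∖ K`. -/
theorem statement_7 {α : Type*} {g : ℕ} (M : Matroid α) (hE : M.E.Finite)
    (C : Fin g → Set α) (hCS : M.IsCycleSystem C) (i : Fin g) (K : Set α)
    (hK : M.Circuit K) (hKsub : K ⊆ uniqueUnion C Finset.univ ∩ C i) :
    (∀ D, M.Circuit D → (D ∩ K).Nonempty → D = K) ∧
      (M.deleteSet K).IsCycleSystem (fun j : {j : Fin g // j ≠ i} => C j.1) := by
  obtain ⟨hcard, hcyc, hdep⟩ := hCS
  have hKdep : M.Dep K := hK.1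
  have hKE : K ⊆ M.E := hKdep.subset_ground
  have hKfin : K.Finite := hE.subset hKE
  have gpos : 0 < g := i.pos
  have hCE : ∀ j, C j ⊆ M.E := by
    intro j
    obtain ⟨S, hS, hSeq⟩ := hcyc j
    rw [hSeq]
    exact sUnion_subset fun c hc => (hS c hc).1.subset_ground
  have hdisj : ∀ j, j ≠ i → ∀ e ∈ K, e ∉ C j := by
    intro j hj e heK hej
    obtain ⟨hU, heCi⟩ := hKsub heK
    obtain ⟨k, -, huniq⟩ := hU
    exact hj ((huniq j ⟨Finset.mem_univ j, hej⟩).trans (huniq i ⟨Finset.mem_univ i, heCi⟩).symm)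
  have hproper : ∀ Cc : Set α, M.Circuit Cc → ∀ X, X ⊆ Cc → X ≠ Cc → M.Indep X := by
    intro Cc hCc X hXC hne
    by_contra hnotind
    have hXdep : M.Dep X := ⟨hnotind, hXC.trans hCc.1.subset_ground⟩
    exact hne (hXC.antisymm (hCc.2 hXdep hXC))
  have hUsub : ∀ σ : Finset (Fin g), i ∉ σ → uniqueUnion C σ ⊆ M.E \ K := by
    intro σ hiσ e he
    obtain ⟨j, ⟨hjσ, hjC⟩, -⟩ := he
    have hji : j ≠ i := fun h => hiσ (h ▸ hjσ)
    exact ⟨hCE j hjC, fun heK => hdisj j hji e heK hjC⟩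
  -- key construction: for any basis `B'` of `E \ K`, the complement has size `g - 1` and
  -- any base extending it misses exactly one element of `K`.
  have key : ∀ B', M.IsBasis B' (M.E \ K) →
      ((M.E \ K) \ B').ncard = g - 1 ∧
      ∃ B x, M.IsBase B ∧ B ∩ (M.E \ K) = B' ∧ K \ B = {x} := by
    intro B' hB'
    obtain ⟨B, hB, hB'B⟩ := hB'.indep.exists_isBase_superset
    have hBE : B ⊆ M.E := hB.subset_ground
    have hBcap : B ∩ (M.E \ K) = B' :=
      (hB'.eq_of_subset_indep (hB.indep.subset inter_subset_left)
        (subset_inter hB'B hB'.subset) inter_subset_right).symm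
    have hrk : M.rkNat = B.ncard := M.exists_isBase.choose_spec.ncard_eq_ncard_of_isBase hB
    have hsplit : (M.E \ B).ncard + B.ncard = M.E.ncard := by
      rw [← Set.ncard_union_eq disjoint_sdiff_left (hE.diff) (hE.subset hBE),
        diff_union_of_subset hBE]
    have hrkle : M.rkNat ≤ M.E.ncard := by
      rw [hrk]; exact Set.ncard_le_ncard hBE hE
    have hTg : (M.E \ B).ncard = g := by
      rw [Fintype.card_fin] at hcard; omega
    have hT'fin : ((M.E \ K) \ B').Finite := (hE.diff).diff
    have hhit : g - 1 ≤ ((M.E \ K) \ B').ncard := by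
      refine hit_lemma C (g - 1) (Finset.univ.erase i) ?_ _ hT'fin ?_
      · rw [Finset.card_erase_of_mem (Finset.mem_univ i), Finset.card_univ, Fintype.card_fin]
      intro σ hσ hσsub
      by_contra hempty
      rw [Set.not_nonempty_iff_eq_empty] at hempty
      have hiσ : i ∉ σ := fun h => (Finset.mem_erase.mp (hσsub h)).1 rfl
      have hsub : uniqueUnion C σ ⊆ B' := by
        intro e he
        by_contra heB'
        have : e ∈ ((M.E \ K) \ B') ∩ uniqueUnion C σ := ⟨⟨hUsub σ hiσ he, heB'⟩, he⟩
        rw [hempty] at this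
        exact this
      exact (hdep σ hσ).not_indep (hB'.indep.subset hsub)
    have hT'sub : (M.E \ K) \ B' ⊆ M.E \ B := by
      rintro t ⟨⟨htE, htK⟩, htB'⟩
      exact ⟨htE, fun htB => htB' (hBcap ▸ (⟨htB, htE, htK⟩ : t ∈ B ∩ (M.E \ K)))⟩
    have hKBsub : K \ B ⊆ M.E \ B := fun a ha => ⟨hKE ha.1, ha.2⟩
    have hdisj2 : Disjoint ((M.E \ K) \ B') (K \ B) := by
      refine Set.disjoint_left.mpr ?_
      rintro a ⟨⟨-, haK⟩, -⟩ ⟨haK', -⟩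
      exact haK haK'
    have hunion : ((M.E \ K) \ B').ncard + (K \ B).ncard ≤ g := by
      rw [← hTg, ← Set.ncard_union_eq hdisj2 hT'fin (hKfin.diff)]
      exact Set.ncard_le_ncard (union_subset hT'sub hKBsub) (hE.diff)
    have hKBne : (K \ B).Nonempty := by
      rw [Set.nonempty_iff_ne_empty]
      intro h
      exact hKdep.not_indep (hB.indep.subset (diff_eq_empty.mp h))
    have hKBpos : 1 ≤ (K \ B).ncard := (Set.ncard_pos (hKfin.diff)).mpr hKBne
    have h1 : (K \ B).ncard = 1 := by omega
    obtain ⟨x, hx⟩ := Set.ncard_eq_one.mp h1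
    exact ⟨by omega, B, x, hB, hBcap, hx⟩
  -- Part (a)
  have partA : ∀ D, M.Circuit D → (D ∩ K).Nonempty → D = K := by
    intro D hD hDKne
    by_contra hne
    obtain ⟨e, heD, heK⟩ := hDKne
    have hDdep := hD.1
    have hDE : D ⊆ M.E := hDdep.subset_ground
    have hKD : ¬ K ⊆ D := fun h => hne ((hD.2 hKdep h).antisymm h)
    obtain ⟨y, hyK, hyD⟩ := not_subset.mp hKD
    have hne' : D \ K ≠ D := by
      intro h
      have : e ∈ D \ K := h.symm ▸ heD
      exact this.2 heK
    have hDKind : M.Indep (D \ K) := hproper D hD (D \ K) diff_subset hne'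
    have hDKsub : D \ K ⊆ M.E \ K := fun a ha => ⟨hDE ha.1, ha.2⟩
    obtain ⟨B', hB', hDKB'⟩ := hDKind.subset_isBasis_of_subset hDKsub diff_subset
    obtain ⟨-, B, x, hB, hBcap, hKx⟩ := key B' hB'
    have hB'B : B' ⊆ B := by
      rw [← hBcap]; exact inter_subset_left
    have hxKB : x ∈ K \ B := by rw [hKx]; exact rfl
    have hKxB : K \ {x} ⊆ B := by
      rintro a ⟨haK, hax⟩
      by_contra haB
      have : a ∈ K \ B := ⟨haK, haB⟩
      rw [hKx] at this
      exact hax this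
    have hxD : x ∈ D := by
      by_contra hxD
      refine hDdep.not_indep (hB.indep.subset ?_)
      intro a haD
      by_cases haK : a ∈ K
      · exact hKxB ⟨haK, fun h => hxD (mem_singleton_iff.mp h ▸ haD)⟩
      · exact hB'B (hDKB' ⟨haD, haK⟩)
    have hJ2sub : (D ∪ K) \ {x} ⊆ B := by
      rintro a ⟨haDK, hax⟩
      rcases haDK with haD | haK
      · by_cases haK : a ∈ K
        · exact hKxB ⟨haK, hax⟩
        · exact hB'B (hDKB' ⟨haD, haK⟩)
      · exact hKxB ⟨haK, hax⟩
    have hJ2ind : M.Indep ((D ∪ K) \ {x}) := hB.indep.subset hJ2sub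
    have hKyind : M.Indep (K \ {y}) := hproper K hK (K \ {y}) diff_subset (by
      intro h
      have : y ∈ K \ {y} := h.symm ▸ hyK
      exact this.2 rfl)
    have hDKE : D ∪ K ⊆ M.E := union_subset hDE hKE
    have hKyDK : K \ {y} ⊆ D ∪ K := fun a ha => Or.inr ha.1
    obtain ⟨J, hJ, hKyJ⟩ := hKyind.subset_isBasis_of_subset hKyDK hDKE
    have hyJ : y ∉ J := by
      intro hyJ
      refine hKdep.not_indep (hJ.indep.subset ?_)
      intro a haK
      by_cases h : a = y
      · exact h ▸ hyJ
      · exact hKyJ ⟨haK, h⟩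
    obtain ⟨z, hzD, hzJ⟩ := not_subset.mp
      (show ¬ D ⊆ J from fun h => hDdep.not_indep (hJ.indep.subset h))
    have hzy : z ≠ y := fun h => hyD (h ▸ hzD)
    have hDKfin : (D ∪ K).Finite := hE.subset hDKE
    have hJfin : J.Finite := hDKfin.subset hJ.subset
    have hJ2fin : ((D ∪ K) \ {x}).Finite := hDKfin.diff
    have hN1 : ((D ∪ K) \ {x}).ncard + 1 = (D ∪ K).ncard :=
      Set.ncard_diff_singleton_add_one (Or.inl hxD) hDKfin
    have hJyz : J ∪ {y, z} ⊆ D ∪ K := by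
      refine union_subset hJ.subset ?_
      rintro a (rfl | rfl)
      exacts [Or.inr hyK, Or.inl hzD]
    have hdisjJ : Disjoint J ({y, z} : Set α) := by
      rw [Set.disjoint_right]
      rintro a (rfl | rfl)
      exacts [hyJ, hzJ]
    have hcard2 : J.ncard + 2 ≤ (D ∪ K).ncard := by
      have hu : (J ∪ {y, z}).ncard = J.ncard + 2 := by
        rw [Set.ncard_union_eq hdisjJ hJfin ((Set.finite_singleton _).insert _),
          Set.ncard_pair hzy.symm]
      rw [← hu]
      exact Set.ncard_le_ncard hJyz hDKfin
    have hJlt : J.encard < ((D ∪ K) \ {x}).encard := by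
      rw [← hJfin.cast_ncard_eq, ← hJ2fin.cast_ncard_eq]
      exact_mod_cast (by omega : J.ncard < ((D ∪ K) \ {x}).ncard)
    obtain ⟨w, hw, hwind⟩ := hJ.indep.augment hJ2ind hJlt
    have hwDK : w ∈ D ∪ K := (diff_subset hw.1 : w ∈ D ∪ K)
    have heq := hJ.eq_of_subset_indep hwind (subset_insert w J)
      (insert_subset hwDK hJ.subset)
    exact hw.2 (heq ▸ mem_insert w J)
  refine ⟨partA, ?_⟩
  -- Part (b)
  obtain ⟨B', hB'⟩ := M.exists_isBasis (M.E \ K) diff_subset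
  obtain ⟨hT'card, -⟩ := key B' hB'
  have hB'base : (M ↾ (M.E \ K)).IsBase B' := (isBase_restrict_iff diff_subset).mpr hB'
  have hrk' : (M ↾ (M.E \ K)).rkNat = B'.ncard :=
    (M ↾ (M.E \ K)).exists_isBase.choose_spec.ncard_eq_ncard_of_isBase hB'base
  have hEcard : ((M.E \ K) \ B').ncard + B'.ncard = (M.E \ K).ncard := by
    rw [← Set.ncard_union_eq disjoint_sdiff_left ((hE.diff).diff)
      ((hE.diff).subset hB'.subset), diff_union_of_subset hB'.subset]
  have hdel : M.deleteSet K = M ↾ (M.E \ K) := rfl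
  refine ⟨?_, ?_, ?_⟩
  · have h1 : Fintype.card {j : Fin g // j ≠ i} = g - 1 := by
      rw [Fintype.card_subtype_compl, Fintype.card_subtype_eq, Fintype.card_fin]
    rw [h1, hdel]
    rw [show (M ↾ (M.E \ K)).E = M.E \ K from rfl, hrk']
    omega
  · rintro ⟨j, hj⟩
    obtain ⟨S, hS, hSeq⟩ := hcyc j
    have hCj : C j ⊆ M.E \ K := fun a ha => ⟨hCE _ ha, fun haK => hdisj j hj a haK ha⟩
    refine ⟨S, fun c hc => ?_, hSeq⟩
    have hcsub : c ⊆ M.E \ K := (subset_sUnion_of_mem hc).trans (hSeq ▸ hCj)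
    have hcirc := hS c hc
    rw [hdel]
    constructor
    · exact restrict_dep_iff.mpr ⟨hcirc.1.not_indep, hcsub⟩
    · intro Y hY hYc
      have hY' := restrict_dep_iff.mp hY
      exact hcirc.2 ⟨hY'.1, hY'.2.trans diff_subset⟩ hYc
  · intro σ' hσ'
    have hUeq : uniqueUnion (fun j : {j : Fin g // j ≠ i} => C j.1) σ' =
        uniqueUnion C (σ'.image Subtype.val) := by
      ext e
      constructor
      · rintro ⟨j', ⟨hj', hC⟩, huniq⟩
        refine ⟨j'.1, ⟨Finset.mem_image_of_mem _ hj', hC⟩, ?_⟩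
        rintro j ⟨hjσ, hjC⟩
        obtain ⟨a, ha, rfl⟩ := Finset.mem_image.mp hjσ
        rw [huniq a ⟨ha, hjC⟩]
      · rintro ⟨j, ⟨hjσ, hjC⟩, huniq⟩
        obtain ⟨a, ha, rfl⟩ := Finset.mem_image.mp hjσ
        refine ⟨a, ⟨ha, hjC⟩, ?_⟩
        rintro b ⟨hb, hbC⟩
        exact Subtype.ext (huniq b.1 ⟨Finset.mem_image_of_mem _ hb, hbC⟩)
    have hiσ : i ∉ σ'.image Subtype.val := by
      intro h
      obtain ⟨a, -, ha⟩ := Finset.mem_image.mp h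
      exact a.2 ha
    rw [hdel, hUeq]
    exact restrict_dep_iff.mpr ⟨(hdep _ (hσ'.image _)).not_indep, hUsub _ hiσ⟩
end

section
/- Let W be a matroid on a finite ground set E, and let E = E_M ⊔ E_N be a partition of E such that every circuit of W is contained in E_M or contained in E_N; set M = W|E_M and N = W|E_N (the restrictions), with coranks g_M and g_N. Suppose W has a cycle system of the form (C_1, …, C_{g_M}, K_1 ∪ D_1, …, K_{g_N} ∪ D_{g_N}), where each C_i ⊆ E_M is a cycle of M, each K_i ⊆ E_M is either empty or a cycle of M, and each D_i ⊆ E_N is a cycle of N. Then (C_1, …, C_{g_M}) is a cycle system for M and (D_1, …, D_{g_N}) is a cycle system for N. -/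
open Set Matroid

section AuxSt8

variable {α : Type*}


lemma aux_count_exactly_one {α ι : Type*} (S : ι → Set α) :
    ∀ (n : ℕ) (s : Finset ι) (F : Set α), s.card = n → F.Finite →
      (∀ σ : Finset ι, σ ⊆ s → σ.Nonempty → ∃ e ∈ F, ∃! i, i ∈ σ ∧ e ∈ S i) →
      s.card ≤ F.ncard := by
  intro n
  haveI := Classical.decEq ι
  induction n with
  | zero => intro s F hs _ _; omega
  | succ n ih =>
    intro s F hs hF h
    have hsne : s.Nonempty := Finset.card_pos.mp (by omega)
    obtain ⟨e, heF, i0, ⟨hi0s, hi0⟩, huniq⟩ := h s subset_rfl hsne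
    have key := ih (s.erase i0) (F \ {e})
      (by rw [Finset.card_erase_of_mem hi0s, hs]; omega) (hF.diff)
      (by
        intro σ hσ hσne
        obtain ⟨e', he'F, j, ⟨hjσ, hjS⟩, hju⟩ := h σ (hσ.trans (Finset.erase_subset _ _)) hσne
        have hjne : j ≠ i0 := fun hji => (Finset.notMem_erase i0 s) (hji ▸ hσ hjσ)
        have he'ne : e' ≠ e := by
          rintro rfl
          exact hjne (huniq j ⟨hσ.trans (Finset.erase_subset _ _) hjσ, hjS⟩)
        exact ⟨e', ⟨he'F, by simpa using he'ne⟩, j, ⟨hjσ, hjS⟩, hju⟩)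
    have hFc : (F \ {e}).ncard = F.ncard - 1 := by
      rw [Set.ncard_diff (by simpa using heF) (Set.finite_singleton e), Set.ncard_singleton]
    have hF1 : 1 ≤ F.ncard := (Set.ncard_pos hF).mpr ⟨e, heF⟩
    rw [Finset.card_erase_of_mem hi0s] at key
    omega

lemma aux_count_with_block {α ι : Type*} (S : ι → Set α) (R Z : Set α) (hRZ : R ⊆ Z) :
    ∀ (n : ℕ) (s : Finset ι) (F : Set α), s.card = n → F.Finite →
      (∀ σ : Finset ι, σ ⊆ s → σ.Nonempty → ∃ e ∈ F, ∃! i, i ∈ σ ∧ e ∈ S i) →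
      (∀ σ : Finset ι, σ ⊆ s →
        ∃ e ∈ F, ((∃! i, i ∈ σ ∧ e ∈ S i) ∧ e ∉ Z) ∨ ((∀ i ∈ σ, e ∉ S i) ∧ e ∈ R)) →
      s.card < F.ncard := by
  intro n
  haveI := Classical.decEq ι
  induction n with
  | zero =>
    intro s F hs hF _ h2
    obtain ⟨e, heF, _⟩ := h2 ∅ (Finset.empty_subset s)
    have := (Set.ncard_pos hF).mpr ⟨e, heF⟩
    omega
  | succ n ih =>
    intro s F hs hF h1 h2
    obtain ⟨e, heF, hcase⟩ := h2 s subset_rfl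
    have hFc : (F \ {e}).ncard = F.ncard - 1 := by
      rw [Set.ncard_diff (by simpa using heF) (Set.finite_singleton e), Set.ncard_singleton]
    have hF1 : 1 ≤ F.ncard := (Set.ncard_pos hF).mpr ⟨e, heF⟩
    rcases hcase with ⟨⟨i0, ⟨hi0s, hi0S⟩, hu⟩, heZ⟩ | ⟨hnoS, heR⟩
    · have key := ih (s.erase i0) (F \ {e})
        (by rw [Finset.card_erase_of_mem hi0s, hs]; omega) (hF.diff)
        (by
          intro σ hσ hσne
          obtain ⟨e', he'F, j, ⟨hjσ, hjS⟩, hju⟩ :=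
            h1 σ (hσ.trans (Finset.erase_subset _ _)) hσne
          have hjne : j ≠ i0 := fun hji => (Finset.notMem_erase i0 s) (hji ▸ hσ hjσ)
          have he'ne : e' ≠ e := by
            rintro rfl
            exact hjne (hu j ⟨hσ.trans (Finset.erase_subset _ _) hjσ, hjS⟩)
          exact ⟨e', ⟨he'F, by simpa using he'ne⟩, j, ⟨hjσ, hjS⟩, hju⟩)
        (by
          intro σ hσ
          obtain ⟨e', he'F, hc⟩ := h2 σ (hσ.trans (Finset.erase_subset _ _))
          rcases hc with ⟨⟨j, ⟨hjσ, hjS⟩, hju⟩, he'Z⟩ | ⟨hno, he'R⟩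
          · have hjne : j ≠ i0 := fun hji => (Finset.notMem_erase i0 s) (hji ▸ hσ hjσ)
            have he'ne : e' ≠ e := by
              rintro rfl
              exact hjne (hu j ⟨hσ.trans (Finset.erase_subset _ _) hjσ, hjS⟩)
            exact ⟨e', ⟨he'F, by simpa using he'ne⟩, Or.inl ⟨⟨j, ⟨hjσ, hjS⟩, hju⟩, he'Z⟩⟩
          · have he'ne : e' ≠ e := fun h => heZ (h ▸ hRZ he'R)
            exact ⟨e', ⟨he'F, by simpa using he'ne⟩, Or.inr ⟨hno, he'R⟩⟩)
      rw [Finset.card_erase_of_mem hi0s] at key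
      omega
    · have key := aux_count_exactly_one S s.card s (F \ {e}) rfl (hF.diff)
        (by
          intro σ hσ hσne
          obtain ⟨e', he'F, j, ⟨hjσ, hjS⟩, hju⟩ := h1 σ hσ hσne
          have he'ne : e' ≠ e := by
            rintro rfl
            exact hnoS j (hσ hjσ) hjS
          exact ⟨e', ⟨he'F, by simpa using he'ne⟩, j, ⟨hjσ, hjS⟩, hju⟩)
      omega


/-- Every dependent set in a finite matroid contains a minimal dependent set. -/
lemma aux_exists_min_dep (W : Matroid α) (hE : W.E.Finite) {X : Set α} (hX : W.Dep X) :
    ∃ Cc, Minimal W.Dep Cc ∧ Cc ⊆ X := by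
  have hXfin : X.Finite := hE.subset hX.2
  have hsfin : {Y | Y ⊆ X ∧ W.Dep Y}.Finite :=
    hXfin.finite_subsets.subset (fun Y hY => hY.1)
  obtain ⟨Cc, hCs, hmin⟩ : ∃ Cc ∈ {Y | Y ⊆ X ∧ W.Dep Y},
      ∀ Y ∈ {Y | Y ⊆ X ∧ W.Dep Y}, Y ⊆ Cc → id Cc = id Y := by
    obtain ⟨Cc, hCc⟩ := hsfin.exists_minimal ⟨X, subset_rfl, hX⟩
    exact ⟨Cc, hCc.prop, fun Y hY hYC => hCc.eq_of_ge hY hYC⟩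
  refine ⟨Cc, ⟨hCs.2, ?_⟩, hCs.1⟩
  intro Y hY hYC
  have hmem : Y ∈ {Y | Y ⊆ X ∧ W.Dep Y} := ⟨hYC.trans hCs.1, hY⟩
  exact le_of_eq (hmin Y hmem hYC)

end AuxSt8

/-- If `W` is the direct sum of `M = W|E_M` and `N = W|E_N` (every circuit of `W`
lies in one side) and `W` has a cycle system of the shape `(C_i ; K_i ∪ D_i)`, then the `C_i`
form a cycle system of `M` and the `D_i` form a cycle system of `N`. -/
theorem statement_8 {α : Type*} (W : Matroid α) (hE : W.E.Finite)
    (EM EN : Set α) (hdisj : Disjoint EM EN) (hunion : EM ∪ EN = W.E)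
    (hsplit : ∀ X, W.Circuit X → X ⊆ EM ∨ X ⊆ EN)
    {gM gN : ℕ}
    (hgM : gM = (W ↾ EM).E.ncard - (W ↾ EM).rkNat)
    (hgN : gN = (W ↾ EN).E.ncard - (W ↾ EN).rkNat)
    (C : Fin gM → Set α) (K D : Fin gN → Set α)
    (hC : ∀ i, C i ⊆ EM ∧ (W ↾ EM).IsCycle (C i))
    (hK : ∀ i, K i ⊆ EM ∧ (K i = ∅ ∨ (W ↾ EM).IsCycle (K i)))
    (hD : ∀ i, D i ⊆ EN ∧ (W ↾ EN).IsCycle (D i))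
    (hsys : W.IsCycleSystem (Sum.elim C (fun i => K i ∪ D i) : Fin gM ⊕ Fin gN → Set α)) :
    (W ↾ EM).IsCycleSystem C ∧ (W ↾ EN).IsCycleSystem D := by
  obtain ⟨hcard, hcyc, hdep⟩ := hsys
  have hEM : EM ⊆ W.E := hunion ▸ subset_union_left
  have hEN : EN ⊆ W.E := hunion ▸ subset_union_right
  set A : Fin gM ⊕ Fin gN → Set α := Sum.elim C (fun i => K i ∪ D i) with hA
  set inlE : Fin gM ↪ Fin gM ⊕ Fin gN := ⟨Sum.inl, Sum.inl_injective⟩ with hinlE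
  set inrE : Fin gN ↪ Fin gM ⊕ Fin gN := ⟨Sum.inr, Sum.inr_injective⟩ with hinrE
  -- the C-side unique unions are dependent in W
  have hCdepW : ∀ σ : Finset (Fin gM), σ.Nonempty → W.Dep (uniqueUnion C σ) := by
    intro σ hσ
    have h := hdep (σ.map inlE) (by
      obtain ⟨i, hi⟩ := hσ
      exact ⟨Sum.inl i, Finset.mem_map_of_mem inlE hi⟩)
    have heq : uniqueUnion C σ = uniqueUnion A (σ.map inlE) := by
      ext e
      constructor
      · rintro ⟨i, ⟨hiσ, hie⟩, hu⟩
        refine ⟨Sum.inl i, ⟨Finset.mem_map_of_mem inlE hiσ, hie⟩, ?_⟩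
        rintro j ⟨hjm, hje⟩
        obtain ⟨i', hi'σ, rfl⟩ := Finset.mem_map.mp hjm
        have h5 : i' = i := hu i' ⟨hi'σ, hje⟩
        simp [h5, hinlE]
      · rintro ⟨j, ⟨hjm, hje⟩, hu⟩
        obtain ⟨i, hiσ, rfl⟩ := Finset.mem_map.mp hjm
        refine ⟨i, ⟨hiσ, hje⟩, ?_⟩
        rintro i' ⟨hi'σ, hi'e⟩
        have := hu (Sum.inl i') ⟨Finset.mem_map_of_mem inlE hi'σ, hi'e⟩
        exact Sum.inl_injective this
    rw [heq]
    exact h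
  have hMsub : ∀ σ : Finset (Fin gM), uniqueUnion C σ ⊆ EM := by
    rintro σ e ⟨i, ⟨_, hie⟩, _⟩
    exact (hC i).1 hie
  have hNsub : ∀ τ : Finset (Fin gN), uniqueUnion D τ ⊆ EN := by
    rintro τ e ⟨i, ⟨_, hie⟩, _⟩
    exact (hD i).1 hie
  have hCdepM : ∀ σ : Finset (Fin gM), σ.Nonempty → (W ↾ EM).Dep (uniqueUnion C σ) := by
    intro σ hσ
    rw [Matroid.restrict_dep_iff]
    exact ⟨(hCdepW σ hσ).1, hMsub σ⟩
  have hMC : (W ↾ EM).IsCycleSystem C :=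
    ⟨by simpa using hgM, fun i => (hC i).2, hCdepM⟩
  refine ⟨hMC, ⟨by simpa using hgN, fun i => (hD i).2, fun τ hτ => ?_⟩⟩
  rw [Matroid.restrict_dep_iff]
  refine ⟨fun hind => ?_, hNsub τ⟩
  -- `hind : W.Indep (uniqueUnion D τ)`; derive a contradiction.
  set M := W ↾ EM with hMdef
  have hB : M.IsBase M.exists_isBase.choose := M.exists_isBase.choose_spec
  set B := M.exists_isBase.choose with hBdef
  have hBE : B ⊆ EM := hB.subset_ground
  have hEMfin : EM.Finite := hE.subset hEM
  set F : Set α := EM \ B with hFdef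
  have hFfin : F.Finite := hEMfin.diff
  have hFcard : F.ncard = gM := by
    rw [hFdef, Set.ncard_diff hBE (hEMfin.subset hBE), hgM]
    rfl
  -- every M-dependent set meets F
  have hwit : ∀ X : Set α, M.Dep X → ∃ e ∈ X, e ∈ F := by
    intro X hX
    by_contra hcon
    push_neg at hcon
    have hXB : X ⊆ B := by
      intro e he
      have heE : e ∈ EM := hX.2 he
      by_contra heB
      exact hcon e he ⟨heE, heB⟩
    exact hX.1 (hB.indep.subset hXB)
  set Z : Set α := ⋃ i ∈ τ, K i with hZdef
  set R : Set α := {x | ∃! i, i ∈ τ ∧ x ∈ K i} with hRdef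
  have hRZ : R ⊆ Z := by
    rintro x ⟨i, ⟨hiτ, hix⟩, -⟩
    exact Set.mem_biUnion hiτ hix
  have h1 : ∀ σ : Finset (Fin gM), σ ⊆ Finset.univ → σ.Nonempty →
      ∃ e ∈ F, ∃! i, i ∈ σ ∧ e ∈ C i := by
    intro σ _ hσ
    obtain ⟨e, he, heF⟩ := hwit _ (hCdepM σ hσ)
    exact ⟨e, heF, he⟩
  have h2 : ∀ σ : Finset (Fin gM), σ ⊆ Finset.univ →
      ∃ e ∈ F, ((∃! i, i ∈ σ ∧ e ∈ C i) ∧ e ∉ Z) ∨ ((∀ i ∈ σ, e ∉ C i) ∧ e ∈ R) := by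
    intro σ _
    set σ'' : Finset (Fin gM ⊕ Fin gN) := σ.map inlE ∪ τ.map inrE with hσ''
    have hσ''ne : σ''.Nonempty := by
      obtain ⟨i, hi⟩ := hτ
      exact ⟨Sum.inr i, Finset.mem_union_right _ (Finset.mem_map_of_mem inrE hi)⟩
    have hVdep : W.Dep (uniqueUnion A σ'') := hdep σ'' hσ''ne
    -- V ∩ EM is M-dependent
    obtain ⟨Cc, hCcmin, hCcV⟩ := aux_exists_min_dep W hE hVdep
    have hCcside := hsplit Cc hCcmin
    have hCcEM : Cc ⊆ EM := by
      rcases hCcside with h | h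
      · exact h
      · -- Cc ⊆ EN: then Cc ⊆ uniqueUnion D τ, contradicting independence
        exfalso
        have hCcD : Cc ⊆ uniqueUnion D τ := by
          intro e he
          have heEN : e ∈ EN := h he
          have heEM : e ∉ EM := fun hem => (hdisj.ne_of_mem hem heEN) rfl
          obtain ⟨j, ⟨hjm, hje⟩, hju⟩ := hCcV he
          rcases j with i | i
          · exact absurd ((hC i).1 hje) heEM
          · have hiτ : i ∈ τ := by
              rcases Finset.mem_union.mp hjm with hm | hm
              · obtain ⟨i', _, heq⟩ := Finset.mem_map.mp hm
                exact absurd heq (by simp [hinlE])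
              · obtain ⟨i', hi', heq⟩ := Finset.mem_map.mp hm
                have : i' = i := by simpa [hinrE] using heq
                exact this ▸ hi'
            have heD : e ∈ D i := by
              rcases hje with hk | hd
              · exact absurd ((hK i).1 hk) heEM
              · exact hd
            refine ⟨i, ⟨hiτ, heD⟩, ?_⟩
            rintro i' ⟨hi'τ, hi'e⟩
            have := hju (Sum.inr i')
              ⟨Finset.mem_union_right _ (Finset.mem_map_of_mem inrE hi'τ), Or.inr hi'e⟩
            exact Sum.inr_injective this
        exact hCcmin.prop.1 (hind.subset hCcD)
    have hVMdep : M.Dep ((uniqueUnion A σ'') ∩ EM) := by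
      rw [hMdef, Matroid.restrict_dep_iff]
      constructor
      · intro hindVM
        exact hCcmin.prop.1 (hindVM.subset (subset_inter hCcV hCcEM))
      · exact inter_subset_right
    obtain ⟨e, ⟨heV, heEM⟩, heF⟩ := hwit _ hVMdep
    refine ⟨e, heF, ?_⟩
    obtain ⟨j, ⟨hjm, hje⟩, hju⟩ := heV
    have heEN : e ∉ EN := fun hen => (hdisj.ne_of_mem heEM hen) rfl
    rcases j with i | i
    · -- unique witness is a C-index
      have hiσ : i ∈ σ := by
        rcases Finset.mem_union.mp hjm with hm | hm
        · obtain ⟨i', hi', heq⟩ := Finset.mem_map.mp hm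
          have : i' = i := by simpa [hinlE] using heq
          exact this ▸ hi'
        · obtain ⟨i', _, heq⟩ := Finset.mem_map.mp hm
          exact absurd heq (by simp [hinrE])
      left
      constructor
      · refine ⟨i, ⟨hiσ, hje⟩, ?_⟩
        rintro i' ⟨hi'σ, hi'e⟩
        have := hju (Sum.inl i')
          ⟨Finset.mem_union_left _ (Finset.mem_map_of_mem inlE hi'σ), hi'e⟩
        exact Sum.inl_injective this
      · intro heZ
        obtain ⟨i₂, hi₂τ, hi₂K⟩ := by
          simpa [hZdef] using heZ
        have := hju (Sum.inr i₂)
          ⟨Finset.mem_union_right _ (Finset.mem_map_of_mem inrE hi₂τ), Or.inl hi₂K⟩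
        exact absurd this (by simp)
    · -- unique witness is a K-index
      have hiτ : i ∈ τ := by
        rcases Finset.mem_union.mp hjm with hm | hm
        · obtain ⟨i', _, heq⟩ := Finset.mem_map.mp hm
          exact absurd heq (by simp [hinlE])
        · obtain ⟨i', hi', heq⟩ := Finset.mem_map.mp hm
          have : i' = i := by simpa [hinrE] using heq
          exact this ▸ hi'
      have heK : e ∈ K i := by
        rcases hje with hk | hd
        · exact hk
        · exact absurd ((hD i).1 hd) heEN
      right
      constructor
      · intro i' hi'σ hi'C
        have := hju (Sum.inl i')
          ⟨Finset.mem_union_left _ (Finset.mem_map_of_mem inlE hi'σ), hi'C⟩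
        exact absurd this (by simp)
      · refine ⟨i, ⟨hiτ, heK⟩, ?_⟩
        rintro i' ⟨hi'τ, hi'K⟩
        have := hju (Sum.inr i')
          ⟨Finset.mem_union_right _ (Finset.mem_map_of_mem inrE hi'τ), Or.inl hi'K⟩
        exact Sum.inr_injective this
  have hfinal := aux_count_with_block C R Z hRZ (Finset.univ : Finset (Fin gM)).card
    Finset.univ F rfl hFfin h1 h2
  rw [hFcard] at hfinal
  simp at hfinal
end
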